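/- (Local smoothness condition.) Suppose Assumptions A1 and A2 both hold with parameter δ satisfying 0 < δ ≤ σ_r/16, and suppose in addition that (1/m) Σ_{i=1}^m ‖A_i‖² ≤ 9n (operator norms). Then for any Z ∈ R^{n×r} with d(Z, Z*) ≤ √((3/16) σ_r), setting H = Z − Z̄, we have ‖∇f(Z)‖_F² ≤ 144 n (‖Z̄‖_F² + (3/16) σ_r) · ((σ_1 + (9/64) σ_r) ‖H‖_F² + ‖H^T Z̄‖_F²). -/

import Mathlib

/-!
Write `Z = Z̄ + H`. Since `b_i = tr(Z̄ᵀ A_i Z̄)`, the `i`-th residual is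
`2 tr(Z̄ᵀ A_i H) + tr(Hᵀ A_i H)`, and Cauchy–Schwarz bounds `‖∇f(Z)‖_F²` by the mean squared
residual times `(1/m) Σ ‖A_i‖² ≤ 9n` times `‖Z‖_F² ≤ 2(‖Z̄‖_F² + ‖H‖_F²)`.
Expanding the mean square of each residual term over pairs of columns `(s, k)` turns it into
quadratic forms of the matrices of A2 (cross term) and A1 (quadratic term), which are
`δ / r`-close to `2 z̄_sᵀ z̄_k I + 2 z̄_k z̄_sᵀ` and `2 h_s h_sᵀ`. Summing those population values
gives `tr(Z̄ᵀ Z̄ Hᵀ H) ≤ σ_1 ‖H‖_F²` (as `Z̄ᵀ Z̄` is orthogonally similar to `diag σ`),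
`tr((Hᵀ Z̄)²) ≤ ‖Hᵀ Z̄‖_F²` and `‖Hᵀ H‖_F² ≤ ‖H‖_F⁴`, while the `δ / r` errors add up to
at most a multiple of `δ ‖H‖_F²`. With `δ ≤ σ_r / 16` and `‖H‖_F² ≤ 3σ_r / 16`, the error terms
and the `‖H‖_F⁴` term are absorbed into `(9/64) σ_r ‖H‖_F²`.
-/

open Matrix MeasureTheory ProbabilityTheory Real
open scoped BigOperators ENNReal

noncomputable section

/-- Frobenius norm of a real matrix. -/
def frobNorm {a b : ℕ} (M : Matrix (Fin a) (Fin b) ℝ) : ℝ :=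
  Real.sqrt (∑ i, ∑ j, (M i j) ^ 2)

/-- Frobenius (trace) inner product `⟨M, N⟩ = trace (Mᵀ N)`. -/
def frobInner {a b : ℕ} (M N : Matrix (Fin a) (Fin b) ℝ) : ℝ :=
  ∑ i, ∑ j, M i j * N i j

/-- Operator (spectral) norm of a real square matrix. -/
def opNorm {n : ℕ} (M : Matrix (Fin n) (Fin n) ℝ) : ℝ :=
  ‖LinearMap.toContinuousLinearMap (Matrix.toEuclideanLin M)‖

/-- An `r × r` real matrix is orthonormal if `U Uᵀ = Uᵀ U = I`. -/
def IsOrthoMat {r : ℕ} (U : Matrix (Fin r) (Fin r) ℝ) : Prop :=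
  U * Uᵀ = 1 ∧ Uᵀ * U = 1

/-- The solution set `S̃ = {Z* U : U orthonormal}`. -/
def solSet {n r : ℕ} (Zstar : Matrix (Fin n) (Fin r) ℝ) : Set (Matrix (Fin n) (Fin r) ℝ) :=
  {Zt | ∃ U, IsOrthoMat U ∧ Zt = Zstar * U}

/-- The distance `d(Z, Z*) = min_{Z̃ ∈ S̃} ‖Z − Z̃‖_F`. -/
def dSol {n r : ℕ} (Z Zstar : Matrix (Fin n) (Fin r) ℝ) : ℝ :=
  ⨅ Zt : solSet Zstar, frobNorm (Z - (Zt : Matrix (Fin n) (Fin r) ℝ))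

/-- `Zbar` is a matrix in the solution set closest to `Z`. -/
def IsClosest {n r : ℕ} (Zstar Z Zbar : Matrix (Fin n) (Fin r) ℝ) : Prop :=
  Zbar ∈ solSet Zstar ∧ ∀ Zt ∈ solSet Zstar, frobNorm (Z - Zbar) ≤ frobNorm (Z - Zt)

/-- The gradient `∇f(Z) = (1/m) Σ_i (trace(Zᵀ A_i Z) − b_i) A_i Z`. -/
def gradf {n r m : ℕ} (A : Fin m → Matrix (Fin n) (Fin n) ℝ) (b : Fin m → ℝ)
    (Z : Matrix (Fin n) (Fin r) ℝ) : Matrix (Fin n) (Fin r) ℝ :=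
  (1 / (m : ℝ)) • ∑ i, (Matrix.trace (Zᵀ * A i * Z) - b i) • (A i * Z)

/-- Assumption A1 with parameter `δ`. -/
def AssumpA1 {n m : ℕ} (A : Fin m → Matrix (Fin n) (Fin n) ℝ) (σ1 : ℝ) (r : ℕ)
    (δ : ℝ) : Prop :=
  ∀ u : Fin n → ℝ, Real.sqrt (∑ i, u i ^ 2) ≤ Real.sqrt σ1 →
    opNorm ((1 / (m : ℝ)) • ∑ i, (u ⬝ᵥ (A i).mulVec u) • A i - (2 : ℝ) • vecMulVec u u)
      ≤ δ / r

/-- Assumption A2 with parameter `δ`. -/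
def AssumpA2 {n r m : ℕ} (A : Fin m → Matrix (Fin n) (Fin n) ℝ)
    (Zstar : Matrix (Fin n) (Fin r) ℝ) (δ : ℝ) : Prop :=
  ∀ Zt ∈ solSet Zstar, ∀ s k : Fin r,
    opNorm ((1 / (m : ℝ)) •
        ∑ i, (2 : ℝ) • (A i * vecMulVec (fun j => Zt j s) (fun j => Zt j k) * A i)
      - ((2 * ((fun j => Zt j s) ⬝ᵥ fun j => Zt j k)) • (1 : Matrix (Fin n) (Fin n) ℝ)
          + (2 : ℝ) • vecMulVec (fun j => Zt j k) (fun j => Zt j s)))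
      ≤ δ / r
open Finset

attribute [local instance] Matrix.frobeniusNormedAddCommGroup Matrix.frobeniusNormedSpace

def vecNorm {n : ℕ} (u : Fin n → ℝ) : ℝ := √(∑ i, u i ^ 2)

lemma vecNorm_eq_norm_toLp {n : ℕ} (u : Fin n → ℝ) : vecNorm u = ‖WithLp.toLp 2 u‖ := by
  simp [vecNorm, EuclideanSpace.norm_eq]

lemma vecNorm_nonneg {n : ℕ} (u : Fin n → ℝ) : 0 ≤ vecNorm u := Real.sqrt_nonneg _

lemma vecNorm_sq {n : ℕ} (u : Fin n → ℝ) : vecNorm u ^ 2 = ∑ i, u i ^ 2 :=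
  Real.sq_sqrt (by positivity)

lemma frobNorm_eq_norm {a b : ℕ} (M : Matrix (Fin a) (Fin b) ℝ) : frobNorm M = ‖M‖ := by
  rw [frobNorm, Matrix.frobenius_norm_def, Real.sqrt_eq_rpow]
  simp

lemma frobNorm_nonneg {a b : ℕ} (M : Matrix (Fin a) (Fin b) ℝ) : 0 ≤ frobNorm M :=
  Real.sqrt_nonneg _

lemma frobNorm_sq {a b : ℕ} (M : Matrix (Fin a) (Fin b) ℝ) :
    frobNorm M ^ 2 = ∑ i, ∑ j, M i j ^ 2 :=
  Real.sq_sqrt (by positivity)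

lemma frobNorm_sq_eq_sum_vecNorm_sq {a b : ℕ} (M : Matrix (Fin a) (Fin b) ℝ) :
    frobNorm M ^ 2 = ∑ j, vecNorm (Mᵀ j) ^ 2 := by
  simp_rw [frobNorm_sq, vecNorm_sq, Matrix.transpose_apply]
  exact sum_comm

lemma frobNorm_add_sq_le {a b : ℕ} (M N : Matrix (Fin a) (Fin b) ℝ) :
    frobNorm (M + N) ^ 2 ≤ 2 * (frobNorm M ^ 2 + frobNorm N ^ 2) := by
  have h : frobNorm (M + N) ≤ frobNorm M + frobNorm N := by
    simpa only [frobNorm_eq_norm] using norm_add_le M N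
  nlinarith [pow_le_pow_left₀ (frobNorm_nonneg _) h 2, sq_nonneg (frobNorm M - frobNorm N)]

lemma opNorm_nonneg {n : ℕ} (M : Matrix (Fin n) (Fin n) ℝ) : 0 ≤ opNorm M := norm_nonneg _

lemma vecNorm_mulVec_le {n : ℕ} (M : Matrix (Fin n) (Fin n) ℝ) (v : Fin n → ℝ) :
    vecNorm (M *ᵥ v) ≤ opNorm M * vecNorm v := by
  rw [vecNorm_eq_norm_toLp, vecNorm_eq_norm_toLp]
  exact (LinearMap.toContinuousLinearMap (Matrix.toEuclideanLin M)).le_opNorm (WithLp.toLp 2 v)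

lemma abs_dotProduct_mulVec_le {n : ℕ} (M : Matrix (Fin n) (Fin n) ℝ) (u v : Fin n → ℝ) :
    |u ⬝ᵥ M *ᵥ v| ≤ opNorm M * vecNorm u * vecNorm v := by
  have hinner : u ⬝ᵥ M *ᵥ v = inner ℝ (WithLp.toLp 2 u) (WithLp.toLp 2 (M *ᵥ v)) := by
    simp [EuclideanSpace.inner_eq_star_dotProduct, dotProduct_comm]
  calc |u ⬝ᵥ M *ᵥ v| ≤ vecNorm u * vecNorm (M *ᵥ v) := by
        simpa only [hinner, vecNorm_eq_norm_toLp] using abs_real_inner_le_norm _ _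
    _ ≤ vecNorm u * (opNorm M * vecNorm v) := by
        gcongr
        · exact vecNorm_nonneg u
        · exact vecNorm_mulVec_le M v
    _ = opNorm M * vecNorm u * vecNorm v := by ring

lemma frobNorm_mul_le_opNorm_mul {n r : ℕ} (M : Matrix (Fin n) (Fin n) ℝ)
    (B : Matrix (Fin n) (Fin r) ℝ) : frobNorm (M * B) ≤ opNorm M * frobNorm B := by
  have hcol : ∀ j, (M * B)ᵀ j = M *ᵥ Bᵀ j := fun j => by
    ext i; simp [Matrix.mul_apply, Matrix.mulVec, dotProduct]
  refine (pow_le_pow_iff_left₀ (frobNorm_nonneg _)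
    (mul_nonneg (opNorm_nonneg M) (frobNorm_nonneg B)) two_ne_zero).1 ?_
  rw [mul_pow, frobNorm_sq_eq_sum_vecNorm_sq, frobNorm_sq_eq_sum_vecNorm_sq, mul_sum]
  gcongr with j
  rw [hcol, ← mul_pow]
  exact pow_le_pow_left₀ (vecNorm_nonneg _) (vecNorm_mulVec_le M _) 2

lemma frobNorm_gradf_sq_le {n r m : ℕ} (A : Fin m → Matrix (Fin n) (Fin n) ℝ) (b : Fin m → ℝ)
    (Z : Matrix (Fin n) (Fin r) ℝ) :
    frobNorm (gradf A b Z) ^ 2 ≤ ((1 / (m : ℝ)) * ∑ i, (trace (Zᵀ * A i * Z) - b i) ^ 2)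
      * ((1 / (m : ℝ)) * ∑ i, opNorm (A i) ^ 2) * frobNorm Z ^ 2 := by
  set e : Fin m → ℝ := fun i => trace (Zᵀ * A i * Z) - b i
  have hnorm : frobNorm (gradf A b Z)
      ≤ 1 / (m : ℝ) * (∑ i, |e i| * opNorm (A i)) * frobNorm Z := by
    rw [frobNorm_eq_norm, gradf, norm_smul, Real.norm_of_nonneg (by positivity), mul_assoc,
      sum_mul]
    gcongr
    refine (norm_sum_le _ _).trans (sum_le_sum fun i _ => ?_)
    rw [norm_smul, Real.norm_eq_abs, mul_assoc, ← frobNorm_eq_norm]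
    gcongr
    exact frobNorm_mul_le_opNorm_mul _ _
  have hCS : (∑ i, |e i| * opNorm (A i)) ^ 2 ≤ (∑ i, e i ^ 2) * ∑ i, opNorm (A i) ^ 2 := by
    simpa only [sq_abs] using sum_mul_sq_le_sq_mul_sq univ (fun i => |e i|) (fun i => opNorm (A i))
  calc frobNorm (gradf A b Z) ^ 2
      ≤ (1 / (m : ℝ) * (∑ i, |e i| * opNorm (A i)) * frobNorm Z) ^ 2 :=
        pow_le_pow_left₀ (frobNorm_nonneg _) hnorm 2
    _ = (1 / (m : ℝ)) ^ 2 * (∑ i, |e i| * opNorm (A i)) ^ 2 * frobNorm Z ^ 2 := by ring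
    _ ≤ (1 / (m : ℝ)) ^ 2 * ((∑ i, e i ^ 2) * ∑ i, opNorm (A i) ^ 2) * frobNorm Z ^ 2 := by
        gcongr
    _ = _ := by ring

lemma trace_transpose_mul_mul_eq_sum {n r : ℕ} (A : Matrix (Fin n) (Fin n) ℝ)
    (X Y : Matrix (Fin n) (Fin r) ℝ) : trace (Xᵀ * A * Y) = ∑ s, Xᵀ s ⬝ᵥ A *ᵥ Yᵀ s := by
  simp only [trace, Matrix.diag, Matrix.mul_apply, Matrix.mulVec, dotProduct,
    Matrix.transpose_apply, sum_mul, mul_sum]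
  exact sum_congr rfl fun s _ =>
    sum_comm.trans (sum_congr rfl fun i _ => sum_congr rfl fun j _ => mul_assoc _ _ _)

lemma trace_mul_eq_sum {r : ℕ} (P Q : Matrix (Fin r) (Fin r) ℝ) :
    trace (P * Q) = ∑ s, ∑ k, P s k * Q k s := by
  simp [trace, Matrix.mul_apply]

lemma trace_add_quadForm_sub {n r : ℕ} {A : Matrix (Fin n) (Fin n) ℝ} (hA : A.IsSymm)
    (X H : Matrix (Fin n) (Fin r) ℝ) :
    trace ((X + H)ᵀ * A * (X + H)) - trace (Xᵀ * A * X)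
      = 2 * trace (Xᵀ * A * H) + trace (Hᵀ * A * H) := by
  have hswap : trace (Hᵀ * A * X) = trace (Xᵀ * A * H) := by
    rw [← trace_transpose, Matrix.transpose_mul, Matrix.transpose_mul, hA.eq,
      Matrix.transpose_transpose, Matrix.mul_assoc]
  simp only [Matrix.transpose_add, Matrix.add_mul, Matrix.mul_add, trace_add]
  linarith

/-- `solSet` elaborates `Zstar * U` with the `CStarMatrix` multiplication instance; restating the
membership with `Matrix` multiplication lets the `Matrix` rewriting lemmas apply. -/
lemma exists_eq_mul_of_mem_solSet {n r : ℕ} {Zstar Zt : Matrix (Fin n) (Fin r) ℝ}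
    (hZt : Zt ∈ solSet Zstar) : ∃ U : Matrix (Fin r) (Fin r) ℝ, IsOrthoMat U ∧ Zt = Zstar * U :=
  hZt

lemma trace_mul_mul_transpose_eq_of_mem_solSet {n r : ℕ} (A : Matrix (Fin n) (Fin n) ℝ)
    {Zstar Zt : Matrix (Fin n) (Fin r) ℝ} (hZt : Zt ∈ solSet Zstar) :
    trace (A * (Zstar * Zstarᵀ)) = trace (Ztᵀ * A * Zt) := by
  obtain ⟨U, hU, rfl⟩ := exists_eq_mul_of_mem_solSet hZt
  have hconj : (Zstar * U)ᵀ * A * (Zstar * U) = Uᵀ * (Zstarᵀ * A * Zstar) * U := by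
    simp only [Matrix.transpose_mul, Matrix.mul_assoc]
  rw [hconj, trace_mul_cycle, hU.1, Matrix.one_mul, trace_mul_cycle, trace_mul_comm]

lemma mean_sq_sum_eq {m r : ℕ} (g : Fin m → Fin r → ℝ) :
    1 / (m : ℝ) * ∑ i, (∑ s, g i s) ^ 2 = ∑ s, ∑ k, 1 / (m : ℝ) * ∑ i, g i s * g i k := by
  simp_rw [sq, sum_mul_sum, mul_sum]
  rw [sum_comm]
  exact sum_congr rfl fun s _ => sum_comm

lemma dotProduct_mulVec_comm_of_isSymm {n : ℕ} {A : Matrix (Fin n) (Fin n) ℝ} (hA : A.IsSymm)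
    (x y : Fin n → ℝ) : x ⬝ᵥ A *ᵥ y = y ⬝ᵥ A *ᵥ x := by
  rw [Matrix.dotProduct_mulVec, ← Matrix.mulVec_transpose, hA.eq, dotProduct_comm]

lemma dotProduct_mulVec_le_of_opNorm_le {n : ℕ} {M : Matrix (Fin n) (Fin n) ℝ} {c : ℝ}
    (h : opNorm M ≤ c) (x y : Fin n → ℝ) : x ⬝ᵥ M *ᵥ y ≤ c * (vecNorm x * vecNorm y) :=
  calc x ⬝ᵥ M *ᵥ y ≤ opNorm M * vecNorm x * vecNorm y :=
        (le_abs_self _).trans (abs_dotProduct_mulVec_le M x y)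
    _ ≤ c * (vecNorm x * vecNorm y) := by
        rw [mul_assoc]
        exact mul_le_mul_of_nonneg_right h (mul_nonneg (vecNorm_nonneg x) (vecNorm_nonneg y))

lemma mean_quadForm_mul_le_of_assumpA1 {n m r : ℕ} {A : Fin m → Matrix (Fin n) (Fin n) ℝ}
    {σ1 δ : ℝ} (hA1 : AssumpA1 A σ1 r δ) {u : Fin n → ℝ} (hu : vecNorm u ≤ √σ1)
    (v : Fin n → ℝ) :
    1 / (m : ℝ) * ∑ i, (u ⬝ᵥ A i *ᵥ u) * (v ⬝ᵥ A i *ᵥ v)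
      ≤ 2 * (u ⬝ᵥ v) ^ 2 + δ / r * vecNorm v ^ 2 := by
  have h := dotProduct_mulVec_le_of_opNorm_le (hA1 u hu) v v
  simp only [Matrix.sub_mulVec, Matrix.smul_mulVec, Matrix.sum_mulVec, vecMulVec_mulVec,
    dotProduct_sub, dotProduct_smul, dotProduct_sum, smul_eq_mul, op_smul_eq_mul] at h
  rw [dotProduct_comm v u] at h
  linarith

lemma mean_bilinForm_mul_le_of_assumpA2 {n m r : ℕ} {A : Fin m → Matrix (Fin n) (Fin n) ℝ}
    (hA : ∀ i, (A i).IsSymm) {Zstar Zt : Matrix (Fin n) (Fin r) ℝ} {δ : ℝ}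
    (hA2 : AssumpA2 A Zstar δ) (hZt : Zt ∈ solSet Zstar) (s k : Fin r) (x y : Fin n → ℝ) :
    2 * (1 / (m : ℝ) * ∑ i, (Ztᵀ s ⬝ᵥ A i *ᵥ x) * (Ztᵀ k ⬝ᵥ A i *ᵥ y))
      ≤ 2 * (Ztᵀ s ⬝ᵥ Ztᵀ k) * (x ⬝ᵥ y) + 2 * ((x ⬝ᵥ Ztᵀ k) * (Ztᵀ s ⬝ᵥ y))
        + δ / r * (vecNorm x * vecNorm y) := by
  have h := dotProduct_mulVec_le_of_opNorm_le (hA2 Zt hZt s k) x y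
  simp only [Matrix.sub_mulVec, Matrix.add_mulVec, Matrix.smul_mulVec, Matrix.sum_mulVec,
    ← Matrix.mulVec_mulVec, vecMulVec_mulVec, Matrix.one_mulVec, Matrix.mulVec_smul,
    dotProduct_sub, dotProduct_add, dotProduct_smul, dotProduct_sum, smul_eq_mul,
    op_smul_eq_mul, show (fun j => Zt j s) = Ztᵀ s from rfl,
    show (fun j => Zt j k) = Ztᵀ k from rfl] at h
  simp only [dotProduct_mulVec_comm_of_isSymm (hA _) x (Ztᵀ s), ← mul_sum] at h
  linarith

lemma vecNorm_col_sq_le_frobNorm_sq {n r : ℕ} (H : Matrix (Fin n) (Fin r) ℝ) (s : Fin r) :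
    vecNorm (Hᵀ s) ^ 2 ≤ frobNorm H ^ 2 := by
  rw [frobNorm_sq_eq_sum_vecNorm_sq]
  exact single_le_sum (f := fun k => vecNorm (Hᵀ k) ^ 2) (fun _ _ => sq_nonneg _) (mem_univ s)

lemma sq_sum_vecNorm_col_le {n r : ℕ} (H : Matrix (Fin n) (Fin r) ℝ) :
    (∑ s, vecNorm (Hᵀ s)) ^ 2 ≤ r * frobNorm H ^ 2 := by
  simpa [frobNorm_sq_eq_sum_vecNorm_sq] using
    sq_sum_le_card_mul_sum_sq (s := univ) (f := fun s => vecNorm (Hᵀ s))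

lemma sum_sq_dotProduct_col_le {n r : ℕ} (H : Matrix (Fin n) (Fin r) ℝ) :
    ∑ s, ∑ k, (Hᵀ s ⬝ᵥ Hᵀ k) ^ 2 ≤ frobNorm H ^ 4 := by
  have hgram : ∑ s, ∑ k, (Hᵀ s ⬝ᵥ Hᵀ k) ^ 2 = frobNorm (Hᵀ * H) ^ 2 := by
    rw [frobNorm_sq]; rfl
  have hmul : frobNorm (Hᵀ * H) ≤ frobNorm H ^ 2 := by
    simpa only [frobNorm_eq_norm, Matrix.frobenius_norm_transpose, sq] using
      Matrix.frobenius_norm_mul Hᵀ H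
  rw [hgram, show 4 = 2 * 2 by rfl, pow_mul]
  exact pow_le_pow_left₀ (frobNorm_nonneg _) hmul 2

lemma trace_mul_self_le_frobNorm_sq {r : ℕ} (M : Matrix (Fin r) (Fin r) ℝ) :
    trace (M * M) ≤ frobNorm M ^ 2 := by
  have hswap : ∑ s, ∑ k, M k s ^ 2 = ∑ s, ∑ k, M s k ^ 2 := sum_comm
  calc trace (M * M) = ∑ s, ∑ k, M s k * M k s := trace_mul_eq_sum M M
    _ ≤ ∑ s, ∑ k, (M s k ^ 2 + M k s ^ 2) / 2 := by
        gcongr with s _ k _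
        nlinarith [sq_nonneg (M s k - M k s)]
    _ = (∑ s, ∑ k, M s k ^ 2 + ∑ s, ∑ k, M k s ^ 2) / 2 := by
        simp only [← sum_add_distrib, sum_div]
    _ = frobNorm M ^ 2 := by rw [hswap, frobNorm_sq]; ring

lemma mean_sq_trace_quadForm_le {n m r : ℕ} (hr : 0 < r) {A : Fin m → Matrix (Fin n) (Fin n) ℝ}
    {σ1 δ : ℝ} (hA1 : AssumpA1 A σ1 r δ) {H : Matrix (Fin n) (Fin r) ℝ}
    (hH : frobNorm H ^ 2 ≤ σ1) :
    1 / (m : ℝ) * ∑ i, trace (Hᵀ * A i * H) ^ 2 ≤ 2 * frobNorm H ^ 4 + δ * frobNorm H ^ 2 := by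
  have hcol : ∀ s, vecNorm (Hᵀ s) ≤ √σ1 := fun s =>
    Real.sqrt_le_sqrt ((vecNorm_sq _).symm.trans_le ((vecNorm_col_sq_le_frobNorm_sq H s).trans hH))
  calc 1 / (m : ℝ) * ∑ i, trace (Hᵀ * A i * H) ^ 2
      = ∑ s, ∑ k, 1 / (m : ℝ) * ∑ i, (Hᵀ s ⬝ᵥ A i *ᵥ Hᵀ s) * (Hᵀ k ⬝ᵥ A i *ᵥ Hᵀ k) := by
        simp_rw [trace_transpose_mul_mul_eq_sum]
        exact mean_sq_sum_eq _
    _ ≤ ∑ s, ∑ k, (2 * (Hᵀ s ⬝ᵥ Hᵀ k) ^ 2 + δ / r * vecNorm (Hᵀ k) ^ 2) := by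
        gcongr with s _ k _
        exact mean_quadForm_mul_le_of_assumpA1 hA1 (hcol s) _
    _ = 2 * ∑ s, ∑ k, (Hᵀ s ⬝ᵥ Hᵀ k) ^ 2 + δ * frobNorm H ^ 2 := by
        simp only [sum_add_distrib, ← mul_sum, sum_const, card_univ, Fintype.card_fin,
          nsmul_eq_mul, ← frobNorm_sq_eq_sum_vecNorm_sq]
        field_simp
    _ ≤ 2 * frobNorm H ^ 4 + δ * frobNorm H ^ 2 := by
        gcongr
        exact sum_sq_dotProduct_col_le H

lemma mean_sq_trace_cross_le {n m r : ℕ} (hr : 0 < r) {A : Fin m → Matrix (Fin n) (Fin n) ℝ}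
    (hA : ∀ i, (A i).IsSymm) {Zstar Zt : Matrix (Fin n) (Fin r) ℝ} {δ : ℝ} (hδ : 0 ≤ δ)
    (hA2 : AssumpA2 A Zstar δ) (hZt : Zt ∈ solSet Zstar) (H : Matrix (Fin n) (Fin r) ℝ) :
    2 * (1 / (m : ℝ) * ∑ i, trace (Ztᵀ * A i * H) ^ 2)
      ≤ 2 * trace (Ztᵀ * Zt * (Hᵀ * H)) + 2 * frobNorm (Hᵀ * Zt) ^ 2 + δ * frobNorm H ^ 2 := by
  have hgram : ∑ s, ∑ k, (Ztᵀ s ⬝ᵥ Ztᵀ k) * (Hᵀ s ⬝ᵥ Hᵀ k) = trace (Ztᵀ * Zt * (Hᵀ * H)) := by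
    rw [trace_mul_eq_sum]
    exact sum_congr rfl fun s _ => sum_congr rfl fun k _ => by
      rw [dotProduct_comm (Hᵀ s)]; rfl
  have htwist : ∑ s, ∑ k, (Hᵀ s ⬝ᵥ Ztᵀ k) * (Ztᵀ s ⬝ᵥ Hᵀ k) = trace (Hᵀ * Zt * (Hᵀ * Zt)) := by
    rw [trace_mul_eq_sum]
    exact sum_congr rfl fun s _ => sum_congr rfl fun k _ => by
      rw [dotProduct_comm (Ztᵀ s)]; rfl
  have hcols : δ / r * (∑ s, vecNorm (Hᵀ s)) ^ 2 ≤ δ * frobNorm H ^ 2 := by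
    calc δ / r * (∑ s, vecNorm (Hᵀ s)) ^ 2 ≤ δ / r * (r * frobNorm H ^ 2) := by
          gcongr
          exact sq_sum_vecNorm_col_le H
      _ = δ * frobNorm H ^ 2 := by field_simp
  calc 2 * (1 / (m : ℝ) * ∑ i, trace (Ztᵀ * A i * H) ^ 2)
      = ∑ s, ∑ k, 2 * (1 / (m : ℝ) * ∑ i, (Ztᵀ s ⬝ᵥ A i *ᵥ Hᵀ s) * (Ztᵀ k ⬝ᵥ A i *ᵥ Hᵀ k)) := by
        simp_rw [trace_transpose_mul_mul_eq_sum, mean_sq_sum_eq, mul_sum]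
    _ ≤ ∑ s, ∑ k, (2 * (Ztᵀ s ⬝ᵥ Ztᵀ k) * (Hᵀ s ⬝ᵥ Hᵀ k) + 2 * ((Hᵀ s ⬝ᵥ Ztᵀ k) * (Ztᵀ s ⬝ᵥ Hᵀ k))
          + δ / r * (vecNorm (Hᵀ s) * vecNorm (Hᵀ k))) := by
        gcongr with s _ k _
        exact mean_bilinForm_mul_le_of_assumpA2 hA hA2 hZt s k _ _
    _ = 2 * trace (Ztᵀ * Zt * (Hᵀ * H)) + 2 * trace (Hᵀ * Zt * (Hᵀ * Zt))
          + δ / r * (∑ s, vecNorm (Hᵀ s)) ^ 2 := by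
        simp only [sum_add_distrib, ← mul_sum, mul_assoc, hgram, htwist, sq, sum_mul_sum]
    _ ≤ _ := by linarith [trace_mul_self_le_frobNorm_sq (Hᵀ * Zt)]

lemma frobNorm_sq_eq_trace {n r : ℕ} (H : Matrix (Fin n) (Fin r) ℝ) :
    frobNorm H ^ 2 = trace (Hᵀ * H) := by
  rw [frobNorm_sq, sum_comm]
  simp [trace, Matrix.mul_apply, sq]

lemma trace_mul_gram_le_of_posSemidef {n r : ℕ} {G : Matrix (Fin r) (Fin r) ℝ} {c : ℝ}
    (hG : (c • 1 - G).PosSemidef) (H : Matrix (Fin n) (Fin r) ℝ) :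
    trace (G * (Hᵀ * H)) ≤ c * frobNorm H ^ 2 := by
  have hnonneg : 0 ≤ trace (H * (c • 1 - G) * Hᵀ) := by
    simpa only [conjTranspose_eq_transpose_of_trivial] using
      (hG.mul_mul_conjTranspose_same H).trace_nonneg
  rw [trace_mul_cycle, Matrix.mul_sub, trace_sub, Matrix.mul_smul, Matrix.mul_one, trace_smul,
    smul_eq_mul, ← frobNorm_sq_eq_trace] at hnonneg
  rw [trace_mul_comm G]
  linarith

lemma posSemidef_smul_one_sub_gram {n r : ℕ} {Zstar Zt : Matrix (Fin n) (Fin r) ℝ}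
    {sig : Fin r → ℝ} {c : ℝ} (hsig : ∀ s, sig s ≤ c)
    (hspec : ∃ V, IsOrthoMat V ∧ Zstarᵀ * Zstar = V * diagonal sig * Vᵀ)
    (hZt : Zt ∈ solSet Zstar) : (c • 1 - Ztᵀ * Zt).PosSemidef := by
  obtain ⟨V, hV, hVspec⟩ := hspec
  obtain ⟨U, hU, rfl⟩ := exists_eq_mul_of_mem_solSet hZt
  have hgap : c • 1 - (Zstar * U)ᵀ * (Zstar * U)
      = Uᵀ * (V * diagonal (fun s => c - sig s) * Vᵀ) * U := by
    have hdiag : diagonal (fun s => c - sig s) = c • 1 - diagonal sig := by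
      ext i j
      by_cases h : i = j <;> simp [h]
    rw [hdiag, Matrix.mul_sub, Matrix.sub_mul, Matrix.mul_smul, Matrix.mul_one, Matrix.smul_mul,
      hV.1, ← hVspec, Matrix.mul_sub, Matrix.sub_mul, Matrix.mul_smul, Matrix.mul_one,
      Matrix.smul_mul, hU.2, Matrix.transpose_mul]
    simp only [Matrix.mul_assoc]
  have hD : (diagonal fun s => c - sig s).PosSemidef :=
    posSemidef_diagonal_iff.2 fun s => sub_nonneg.2 (hsig s)
  rw [hgap]
  simpa only [conjTranspose_eq_transpose_of_trivial] using
    (hD.mul_mul_conjTranspose_same V).conjTranspose_mul_mul_same U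

lemma frobNorm_sub_sq_le_of_isClosest {n r : ℕ} {Zstar Z Zbar : Matrix (Fin n) (Fin r) ℝ}
    {c : ℝ} (h : IsClosest Zstar Z Zbar) (hZ : dSol Z Zstar ≤ √c) (hc : 0 ≤ c) :
    frobNorm (Z - Zbar) ^ 2 ≤ c := by
  have : Nonempty (solSet Zstar) := ⟨⟨Zbar, h.1⟩⟩
  have hdist : frobNorm (Z - Zbar) ≤ √c := (le_ciInf fun Zt : solSet Zstar => h.2 Zt Zt.2).trans hZ
  calc frobNorm (Z - Zbar) ^ 2 ≤ √c ^ 2 := pow_le_pow_left₀ (frobNorm_nonneg _) hdist 2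
    _ = c := Real.sq_sqrt hc

lemma mean_sq_residual_le {n m r : ℕ} (hr : 0 < r) {A : Fin m → Matrix (Fin n) (Fin n) ℝ}
    (hA : ∀ i, (A i).IsSymm) {Zstar Zt : Matrix (Fin n) (Fin r) ℝ} {σ1 δ : ℝ} (hδ : 0 ≤ δ)
    (hA1 : AssumpA1 A σ1 r δ) (hA2 : AssumpA2 A Zstar δ) (hZt : Zt ∈ solSet Zstar)
    {H : Matrix (Fin n) (Fin r) ℝ} (hH : frobNorm H ^ 2 ≤ σ1) :
    1 / (m : ℝ) * ∑ i, (trace ((Zt + H)ᵀ * A i * (Zt + H)) - trace (Ztᵀ * A i * Zt)) ^ 2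
      ≤ 8 * trace (Ztᵀ * Zt * (Hᵀ * H)) + 8 * frobNorm (Hᵀ * Zt) ^ 2 + 6 * δ * frobNorm H ^ 2
        + 4 * frobNorm H ^ 4 := by
  have hsplit : ∀ i, (trace ((Zt + H)ᵀ * A i * (Zt + H)) - trace (Ztᵀ * A i * Zt)) ^ 2
      ≤ 8 * trace (Ztᵀ * A i * H) ^ 2 + 2 * trace (Hᵀ * A i * H) ^ 2 := fun i => by
    rw [trace_add_quadForm_sub (hA i)]
    nlinarith [sq_nonneg (2 * trace (Ztᵀ * A i * H) - trace (Hᵀ * A i * H))]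
  have hcross := mean_sq_trace_cross_le hr hA hδ hA2 hZt H
  have hquad := mean_sq_trace_quadForm_le hr hA1 hH
  calc _ ≤ 1 / (m : ℝ) * ∑ i, (8 * trace (Ztᵀ * A i * H) ^ 2 + 2 * trace (Hᵀ * A i * H) ^ 2) := by
        gcongr with i
        exact hsplit i
    _ = 8 * (1 / (m : ℝ) * ∑ i, trace (Ztᵀ * A i * H) ^ 2)
          + 2 * (1 / (m : ℝ) * ∑ i, trace (Hᵀ * A i * H) ^ 2) := by
        rw [sum_add_distrib, ← mul_sum, ← mul_sum]
        ring
    _ ≤ _ := by linarith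

theorem local_smoothness_condition_general {n r m : ℕ} (hr : 0 < r)
    (A : Fin m → Matrix (Fin n) (Fin n) ℝ) (hAsym : ∀ i, (A i).IsSymm)
(Zstar : Matrix (Fin n) (Fin r) ℝ)
    (sig : Fin r → ℝ)
    (hmono : ∀ s t : Fin r, s ≤ t → sig t ≤ sig s)
    (hspec : ∃ V, IsOrthoMat V ∧ Zstarᵀ * Zstar = V * Matrix.diagonal sig * Vᵀ)
    (b : Fin m → ℝ) (hb : ∀ i, b i = Matrix.trace (A i * (Zstar * Zstarᵀ)))
    (δ : ℝ) (hδ0 : 0 < δ) (hδ : δ ≤ (sig ⟨r - 1, Nat.sub_lt hr Nat.one_pos⟩) / 16)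
    (hA1 : AssumpA1 A (sig ⟨0, hr⟩) r δ)
    (hA2 : AssumpA2 A Zstar δ)
    (hAop : (1 / (m : ℝ)) * ∑ i, (opNorm (A i)) ^ 2 ≤ 9 * n)
    (Z Zbar : Matrix (Fin n) (Fin r) ℝ)
    (hZ : dSol Z Zstar ≤ Real.sqrt (3 / 16 * (sig ⟨r - 1, Nat.sub_lt hr Nat.one_pos⟩)))
    (hZbar : IsClosest Zstar Z Zbar) :
    frobNorm (gradf A b Z) ^ 2 ≤
      144 * n * (frobNorm Zbar ^ 2 + 3 / 16 * (sig ⟨r - 1, Nat.sub_lt hr Nat.one_pos⟩)) *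
        (((sig ⟨0, hr⟩) + 9 / 64 * (sig ⟨r - 1, Nat.sub_lt hr Nat.one_pos⟩)) * frobNorm (Z - Zbar) ^ 2
          + frobNorm ((Z - Zbar)ᵀ * Zbar) ^ 2) := by
  set σ1 := sig ⟨0, hr⟩
  set σr := sig ⟨r - 1, Nat.sub_lt hr Nat.one_pos⟩
  set H := Z - Zbar
  have hσ : σr ≤ σ1 := hmono _ _ (Nat.zero_le _)
  have hH : frobNorm H ^ 2 ≤ 3 / 16 * σr := frobNorm_sub_sq_le_of_isClosest hZbar hZ (by linarith)
  have hZeq : Zbar + H = Z := add_sub_cancel Zbar Z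
  have hres : ∀ i, trace (Zᵀ * A i * Z) - b i
      = trace ((Zbar + H)ᵀ * A i * (Zbar + H)) - trace (Zbarᵀ * A i * Zbar) := fun i => by
    rw [hb, hZeq, trace_mul_mul_transpose_eq_of_mem_solSet _ hZbar.1]
  have hgram := trace_mul_gram_le_of_posSemidef
    (posSemidef_smul_one_sub_gram (fun s => hmono ⟨0, hr⟩ s (Nat.zero_le _)) hspec hZbar.1) H
  have hmean : 1 / (m : ℝ) * ∑ i, (trace (Zᵀ * A i * Z) - b i) ^ 2
      ≤ 8 * ((σ1 + 9 / 64 * σr) * frobNorm H ^ 2 + frobNorm (Hᵀ * Zbar) ^ 2) := by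
    simp_rw [hres]
    nlinarith [mean_sq_residual_le hr hAsym hδ0.le hA1 hA2 hZbar.1 (hH.trans (by linarith)),
      mul_le_mul_of_nonneg_right hδ (sq_nonneg (frobNorm H)),
      mul_le_mul_of_nonneg_right hH (sq_nonneg (frobNorm H))]
  have hX : 0 ≤ 8 * ((σ1 + 9 / 64 * σr) * frobNorm H ^ 2 + frobNorm (Hᵀ * Zbar) ^ 2) :=
    le_trans (by positivity) hmean
  have hZsq : frobNorm Z ^ 2 ≤ 2 * (frobNorm Zbar ^ 2 + 3 / 16 * σr) := by
    rw [← hZeq]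
    linarith [frobNorm_add_sq_le Zbar H]
  calc frobNorm (gradf A b Z) ^ 2
      ≤ (1 / (m : ℝ) * ∑ i, (trace (Zᵀ * A i * Z) - b i) ^ 2)
        * (1 / (m : ℝ) * ∑ i, opNorm (A i) ^ 2) * frobNorm Z ^ 2 := frobNorm_gradf_sq_le A b Z
    _ ≤ 8 * ((σ1 + 9 / 64 * σr) * frobNorm H ^ 2 + frobNorm (Hᵀ * Zbar) ^ 2) * (9 * n)
        * (2 * (frobNorm Zbar ^ 2 + 3 / 16 * σr)) := by gcongr
    _ = _ := by ring

theorem local_smoothness_condition {n r m : ℕ} (hr : 0 < r)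
    (A : Fin m → Matrix (Fin n) (Fin n) ℝ) (hAsym : ∀ i, (A i).IsSymm)
(Zstar : Matrix (Fin n) (Fin r) ℝ)
    (sig : Fin r → ℝ) (hpos : ∀ s, 0 < sig s)
    (hmono : ∀ s t : Fin r, s ≤ t → sig t ≤ sig s)
    (hspec : ∃ V, IsOrthoMat V ∧ Zstarᵀ * Zstar = V * Matrix.diagonal sig * Vᵀ)
    (b : Fin m → ℝ) (hb : ∀ i, b i = Matrix.trace (A i * (Zstar * Zstarᵀ)))
    (δ : ℝ) (hδ0 : 0 < δ) (hδ : δ ≤ (sig ⟨r - 1, Nat.sub_lt hr Nat.one_pos⟩) / 16)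
    (hA1 : AssumpA1 A (sig ⟨0, hr⟩) r δ)
    (hA2 : AssumpA2 A Zstar δ)
    (hAop : (1 / (m : ℝ)) * ∑ i, (opNorm (A i)) ^ 2 ≤ 9 * n)
    (Z Zbar : Matrix (Fin n) (Fin r) ℝ)
    (hZ : dSol Z Zstar ≤ Real.sqrt (3 / 16 * (sig ⟨r - 1, Nat.sub_lt hr Nat.one_pos⟩)))
    (hZbar : IsClosest Zstar Z Zbar) :
    frobNorm (gradf A b Z) ^ 2 ≤
      144 * n * (frobNorm Zbar ^ 2 + 3 / 16 * (sig ⟨r - 1, Nat.sub_lt hr Nat.one_pos⟩)) *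
        (((sig ⟨0, hr⟩) + 9 / 64 * (sig ⟨r - 1, Nat.sub_lt hr Nat.one_pos⟩)) * frobNorm (Z - Zbar) ^ 2
          + frobNorm ((Z - Zbar)ᵀ * Zbar) ^ 2) :=
  local_smoothness_condition_general hr A hAsym Zstar sig hmono hspec b hb δ hδ0 hδ hA1 hA2 hAop Z
    Zbar hZ hZbar
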